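/- arXiv:2404.05727 — 3 statements merged into one kernel-verified Lean document; each statement's English description precedes it below -/
import Mathlib

section
/- For every subset I ⊆ ℤ/d there exist nonnegative rational numbers a(I,J), indexed by the subsets J ⊆ ℤ/d with |J| = |I|, such that L_I = Σ_{J ⊆ ℤ/d, |J| = |I|} a(I,J) · N_J holds in R. (This is the algebraic form of the strata-effectivity of all Hodge–Chern monomials on G-Zip^μ for G of type A_1^d.) -/
open MvPolynomial Finset

noncomputable section

/-- The ideal of `ℚ[x_i : i ∈ ℤ/d]` generated by the squares of the variables. -/
def sqIdeal (d : ℕ) : Ideal (MvPolynomial (ZMod d) ℚ) :=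
  Ideal.span (Set.range fun i : ZMod d => (X i) ^ 2)

/-- The ring `R = ℚ[x_i : i ∈ ℤ/d]/(x_i²)`. -/
abbrev ZipRing (d : ℕ) := MvPolynomial (ZMod d) ℚ ⧸ sqIdeal d

/-- The class `l_i` of the variable `x_i` in `R`. -/
def lcl (d : ℕ) (i : ZMod d) : ZipRing d := Ideal.Quotient.mk (sqIdeal d) (X i)

/-- The Hodge–Chern monomial `L_I = ∏_{i ∈ I} l_i`. -/
def Lmon (d : ℕ) (I : Finset (ZMod d)) : ZipRing d := ∏ i ∈ I, lcl d i

/-- `N_i = p·l_i − l_{i+1}`. -/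
def Nelt (d p : ℕ) (i : ZMod d) : ZipRing d := (p : ZipRing d) * lcl d i - lcl d (i + 1)

/-- `P_i = p·l_i + l_{i+1}`. -/
def Pelt (d p : ℕ) (i : ZMod d) : ZipRing d := (p : ZipRing d) * lcl d i + lcl d (i + 1)

/-- The strata class `N_I = ∏_{i ∈ I} N_i`. -/
def Nmon (d p : ℕ) (I : Finset (ZMod d)) : ZipRing d := ∏ i ∈ I, Nelt d p i

/-- `P_I = ∏_{i ∈ I} P_i`. -/
def Pmon (d p : ℕ) (I : Finset (ZMod d)) : ZipRing d := ∏ i ∈ I, Pelt d p i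

/-! Sort `I` as `i₀ < ⋯ < i_{m-1}` in `{0, …, d-1}` and put `i_m = i₀ + d`. Each factor
`p^(i_{s+1} - i_s) l_{i_s} - l_{i_{s+1}}` telescopes to `∑_{i_s ≤ k < i_{s+1}} p^(i_{s+1}-1-k) N_k`,
and the windows `[i_s, i_{s+1})` are disjoint modulo `d`, so the product of these factors is a
non-negative combination of the `N_J` with `|J| = m`. Expanding the same product using `l_i² = 0`,
only two terms survive and it equals `(p^d + (-1)^m) L_I`; since `p ≥ 2` this scalar is positive. -/

/-- Apart from the two displayed terms, a nonzero term of the expansion takes `c 0 * y 0` from the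
first factor and `-y (t + 1)` from the last. -/
theorem exists_prod_range_mul_sub_eq {R : Type*} [CommRing R] (c y : ℕ → R)
    (hy : ∀ s, y s * y s = 0) (t : ℕ) :
    ∃ δ, ∏ s ∈ range (t + 1), (c s * y s - y (s + 1)) =
      (∏ s ∈ range (t + 1), c s) * (∏ s ∈ range (t + 1), y s)
        + (-1) ^ (t + 1) * ∏ s ∈ range (t + 1), y (s + 1) + y 0 * y (t + 1) * δ := by
  induction t with
  | zero => exact ⟨0, by simp; ring⟩
  | succ t ih =>
    obtain ⟨δ, hδ⟩ := ih
    obtain ⟨κ, hκ⟩ : y 0 ∣ (∏ s ∈ range (t + 1), c s) * ∏ s ∈ range (t + 1), y s :=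
      Dvd.dvd.mul_left (dvd_prod_of_mem y (by simp)) _
    have hlast : (∏ s ∈ range (t + 1), y (s + 1)) * y (t + 1) = 0 := by
      rw [prod_range_succ, mul_assoc, hy, mul_zero]
    refine ⟨-κ - y (t + 1) * δ, ?_⟩
    rw [prod_range_succ _ (t + 1), hδ, prod_range_succ c (t + 1), prod_range_succ y (t + 1),
      prod_range_succ (fun s => y (s + 1)) (t + 1)]
    linear_combination (-(y (t + 2))) * hκ + ((-1) ^ (t + 1) * c (t + 1)) * hlast
      + (y 0 * δ * c (t + 1)) * hy (t + 1)

theorem prod_range_mul_sub_eq_of_cyclic {R : Type*} [CommRing R] (c y : ℕ → R)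
    (hy : ∀ s, y s * y s = 0) {m : ℕ} (hm : 0 < m) (hcyc : y m = y 0) :
    ∏ s ∈ range m, (c s * y s - y (s + 1)) =
      ((∏ s ∈ range m, c s) + (-1) ^ m) * ∏ s ∈ range m, y s := by
  obtain ⟨t, rfl⟩ : ∃ t, m = t + 1 := ⟨m - 1, by omega⟩
  obtain ⟨δ, hδ⟩ := exists_prod_range_mul_sub_eq c y hy t
  rw [hδ, prod_range_succ (fun s => y (s + 1)), hcyc, hy, zero_mul, add_zero, ← prod_range_succ' y]
  ring

theorem pow_mul_sub_eq_sum_Ico {R : Type*} [CommRing R] (q : R) (y : ℕ → R) (a n : ℕ) :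
    q ^ n * y a - y (a + n) =
      ∑ k ∈ Ico a (a + n), q ^ (a + n - 1 - k) * (q * y k - y (k + 1)) := by
  induction n generalizing a with
  | zero => simp
  | succ n ih =>
    rw [sum_eq_sum_Ico_succ_bot (by omega), ← add_assoc, add_right_comm, ← ih (a + 1),
      show a + 1 + n - 1 - a = n by omega, pow_succ]
    ring

def stratumCone (d p : ℕ) (S : Finset (ZMod d)) (m : ℕ) : PointedCone ℚ (ZipRing d) :=
  PointedCone.hull ℚ (Nmon d p '' {J | J ⊆ S ∧ J.card = m})

lemma Nmon_mem_stratumCone {d p : ℕ} {S J : Finset (ZMod d)} {m : ℕ} (hJ : J ⊆ S)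
    (hm : J.card = m) : Nmon d p J ∈ stratumCone d p S m :=
  Submodule.subset_span ⟨J, ⟨hJ, hm⟩, rfl⟩

lemma mul_mem_stratumCone {d p : ℕ} {S T : Finset (ZMod d)} {m n : ℕ} (hST : Disjoint S T)
    {x y : ZipRing d} (hx : x ∈ stratumCone d p S m) (hy : y ∈ stratumCone d p T n) :
    x * y ∈ stratumCone d p (S ∪ T) (m + n) := by
  induction hx using Submodule.span_induction with
  | mem x hx =>
    obtain ⟨J, ⟨hJS, rfl⟩, rfl⟩ := hx
    induction hy using Submodule.span_induction with
    | mem y hy =>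
      obtain ⟨K, ⟨hKT, rfl⟩, rfl⟩ := hy
      have hJK : Disjoint J K := hST.mono hJS hKT
      rw [Nmon, Nmon, ← prod_union hJK]
      exact Nmon_mem_stratumCone (union_subset_union hJS hKT) (card_union_of_disjoint hJK)
    | zero => simp
    | add y z _ _ hy hz => rw [mul_add]; exact add_mem hy hz
    | smul c y _ hy => rw [mul_smul_comm]; exact Submodule.smul_mem _ c hy
  | zero => simp
  | add x z _ _ hx hz => rw [add_mul]; exact add_mem hx hz
  | smul c x _ hx => rw [smul_mul_assoc]; exact Submodule.smul_mem _ c hx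

lemma exists_nonneg_of_mem_stratumCone {d p : ℕ} [NeZero d] {S : Finset (ZMod d)} {m : ℕ}
    {x : ZipRing d} (hx : x ∈ stratumCone d p S m) :
    ∃ a : Finset (ZMod d) → ℚ, (∀ J, 0 ≤ a J) ∧
      x = ∑ J ∈ univ.powerset.filter (fun J => J.card = m), a J • Nmon d p J := by
  obtain ⟨l, hl, rfl⟩ := (Finsupp.mem_span_image_iff_linearCombination _).1 hx
  refine ⟨fun J => l J, fun J => (l J).2, ?_⟩
  rw [Finsupp.linearCombination_apply, Finsupp.sum]
  refine sum_subset (fun J hJ => ?_) (fun J _ hJ => ?_)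
  · simpa using (hl hJ).2
  · simp [Finsupp.notMem_support_iff.1 hJ]

lemma stratumCone_mono {d p : ℕ} {S T : Finset (ZMod d)} (hST : S ⊆ T) (m : ℕ) :
    stratumCone d p S m ≤ stratumCone d p T m :=
  Submodule.span_mono (Set.image_mono fun _ ⟨hJ, hc⟩ => ⟨hJ.trans hST, hc⟩)

lemma lcl_mul_self (d : ℕ) (i : ZMod d) : lcl d i * lcl d i = 0 := by
  rw [lcl, ← map_mul, ← sq, Ideal.Quotient.eq_zero_iff_mem]
  exact Ideal.subset_span ⟨i, rfl⟩

lemma natCast_injOn_Ico (d c : ℕ) : Set.InjOn (Nat.cast : ℕ → ZMod d) (Set.Ico c (c + d)) := by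
  intro k hk l hl hkl
  refine ((ZMod.natCast_eq_natCast_iff k l d).1 hkl).eq_of_abs_lt ?_
  rw [abs_sub_lt_iff]
  simp only [Set.mem_Ico] at hk hl
  omega

lemma pow_mul_lcl_sub_lcl_mem_stratumCone (d p : ℕ) {a b : ℕ} (hab : a ≤ b) :
    (p : ZipRing d) ^ (b - a) * lcl d a - lcl d b ∈
      stratumCone d p ((Ico a b).image Nat.cast) 1 := by
  obtain ⟨n, rfl⟩ := Nat.exists_eq_add_of_le hab
  rw [add_tsub_cancel_left, pow_mul_sub_eq_sum_Ico (p : ZipRing d) (fun k => lcl d k)]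
  refine sum_mem fun k hk => ?_
  have hN : (p : ZipRing d) ^ (a + n - 1 - k) * ((p : ZipRing d) * lcl d k - lcl d ↑(k + 1)) =
      ((p ^ (a + n - 1 - k) : ℕ) : ℚ) • Nmon d p {(k : ZMod d)} := by
    rw [Nat.cast_smul_eq_nsmul, nsmul_eq_mul, Nat.cast_pow, Nmon, prod_singleton, Nelt,
      Nat.cast_succ]
  rw [hN]
  exact PointedCone.smul_mem _ (Nat.cast_nonneg _)
    (Nmon_mem_stratumCone (singleton_subset_iff.2 (mem_image_of_mem _ hk)) (card_singleton _))

lemma prod_range_pow_mul_lcl_sub_mem_stratumCone (d p : ℕ) {w : ℕ → ℕ} (hw : Monotone w)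
    {t : ℕ} (ht : w t ≤ w 0 + d) :
    ∏ s ∈ range t, ((p : ZipRing d) ^ (w (s + 1) - w s) * lcl d (w s) - lcl d (w (s + 1))) ∈
      stratumCone d p ((Ico (w 0) (w t)).image Nat.cast) t := by
  induction t with
  | zero => simpa [Nmon] using Nmon_mem_stratumCone (p := p) (empty_subset _) card_empty
  | succ t ih =>
    have h0t : w 0 ≤ w t := hw (Nat.zero_le t)
    have htt : w t ≤ w (t + 1) := hw t.le_succ
    have hdisj : Disjoint ((Ico (w 0) (w t)).image (Nat.cast : ℕ → ZMod d))
        ((Ico (w t) (w (t + 1))).image Nat.cast) := by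
      rw [← disjoint_coe, coe_image, coe_image, coe_Ico, coe_Ico]
      have := disjoint_coe.2 (Ico_disjoint_Ico_consecutive (w 0) (w t) (w (t + 1)))
      rw [coe_Ico, coe_Ico] at this
      exact this.image (natCast_injOn_Ico d (w 0))
        (Set.Ico_subset_Ico_right (by omega)) (Set.Ico_subset_Ico (by omega) ht)
    rw [prod_range_succ, ← Ico_union_Ico_eq_Ico h0t htt, image_union]
    exact mul_mem_stratumCone hdisj (ih (by omega)) (pow_mul_lcl_sub_lcl_mem_stratumCone d p htt)

lemma prod_range_lcl_mem_stratumCone {d p : ℕ} [NeZero d] (hp : 2 ≤ p) {w : ℕ → ℕ}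
    (hw : Monotone w) {m : ℕ} (hm : 0 < m) (hwm : w m = w 0 + d) :
    ∏ s ∈ range m, lcl d (w s) ∈ stratumCone d p univ m := by
  have hprod := prod_range_mul_sub_eq_of_cyclic (fun s => (p : ZipRing d) ^ (w (s + 1) - w s))
    (fun s => lcl d (w s)) (fun s => lcl_mul_self d _) hm (by simp [hwm])
  rw [prod_pow_eq_pow_sum, sum_range_tsub hw, hwm, add_tsub_cancel_left] at hprod
  have hpos : (0 : ℚ) < ((p ^ d + (-1) ^ m : ℤ) : ℚ) := by
    have : 2 ≤ p ^ d := hp.trans (Nat.le_self_pow (NeZero.ne d) p)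
    rcases neg_one_pow_eq_or ℤ m with h | h <;> rw [h] <;> norm_cast <;> omega
  rw [← PointedCone.smul_mem_iff _ hpos, Int.cast_smul_eq_zsmul, zsmul_eq_mul]
  push_cast
  rw [← hprod]
  exact stratumCone_mono (subset_univ _) m
    (prod_range_pow_mul_lcl_sub_mem_stratumCone d p hw hwm.le)

lemma exists_monotone_prod_range_eq_Lmon {d : ℕ} [NeZero d] {I : Finset (ZMod d)}
    (hI : I.Nonempty) :
    ∃ w : ℕ → ℕ, Monotone w ∧ w I.card = w 0 + d ∧
      ∏ s ∈ range I.card, lcl d (w s) = Lmon d I := by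
  set m := I.card
  have hm : 0 < m := hI.card_pos
  set V := I.image ZMod.val
  have hV : V.card = m := card_image_of_injective _ (ZMod.val_injective d)
  set v := V.orderEmbOfFin hV
  have hvd : ∀ k, v k < d := fun k => by
    obtain ⟨i, -, hi⟩ := mem_image.1 (V.orderEmbOfFin_mem hV k)
    exact hi ▸ ZMod.val_lt i
  let w s := if h : s < m then v ⟨s, h⟩ else v ⟨0, hm⟩ + d
  have hwv : ∀ k : Fin m, w k = v k := fun k => dif_pos k.2
  refine ⟨w, monotone_nat_of_le_succ fun s => ?_, by simp [w, hm], ?_⟩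
  · simp only [w]
    split_ifs
    · exact v.monotone (Fin.mk_le_mk.2 s.le_succ)
    · exact (hvd _).le.trans (Nat.le_add_left _ _)
    · omega
    · exact le_rfl
  · rw [← Fin.prod_univ_eq_prod_range (fun s => lcl d (w s)), Lmon]
    simp only [hwv]
    calc ∏ k, lcl d (v k) = ∏ n ∈ V, lcl d n := by
          rw [← map_orderEmbOfFin_univ V hV, prod_map]; rfl
      _ = ∏ i ∈ I, lcl d i := by
          rw [prod_image (ZMod.val_injective d).injOn]; simp only [ZMod.natCast_zmod_val]

lemma Lmon_mem_stratumCone {d p : ℕ} [NeZero d] (hp : 2 ≤ p) (I : Finset (ZMod d)) :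
    Lmon d I ∈ stratumCone d p univ I.card := by
  rcases I.eq_empty_or_nonempty with rfl | hI
  · simpa [Lmon, Nmon] using Nmon_mem_stratumCone (p := p) (empty_subset univ) card_empty
  · obtain ⟨w, hw, hwm, hprod⟩ := exists_monotone_prod_range_eq_Lmon hI
    rw [← hprod]
    exact prod_range_lcl_mem_stratumCone hp hw hI.card_pos hwm

/-- Every Hodge–Chern monomial `L_I` is a non-negative rational linear combination of the
strata classes `N_J` with `|J| = |I|`. -/
theorem stmt0 (d p : ℕ) [NeZero d] (hp : p.Prime) (I : Finset (ZMod d)) :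
    ∃ a : Finset (ZMod d) → ℚ, (∀ J, 0 ≤ a J) ∧
      Lmon d I =
        ∑ J ∈ Finset.univ.powerset.filter (fun J => J.card = I.card),
          a J • Nmon d p J :=
  exists_nonneg_of_mem_stratumCone (Lmon_mem_stratumCone hp.two_le I)
end
end

section
/- Let I ⊆ ℤ/d be a nonempty subset. Then there exist rational numbers a_J, indexed by the subsets J ⊆ ℤ/d with |J| = |I|, such that L_I = Σ_{|J| = |I|} a_J · N_J in R, such that a_I = p^{d−|I|} / (p^d + (−1)^{|I|}), and such that for every J ≠ I with |J| = |I| and a_J ≠ 0 there is an integer e with 0 ≤ e ≤ d − |I| − 1 and a_J = p^e / (p^d + (−1)^{|I|}). -/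
open MvPolynomial Finset

noncomputable section

/-!
For `i ∈ I` let `g i` be the length of the cyclic gap from `i` to the next element `σ i` of `I`,
so that `∑ g i = d`. The relation `N_j = p l_j - l_{j+1}` telescopes along a gap to
`p^(g i) l_i - l_{σ i} = ∑_{k < g i} p^(g i - 1 - k) N_{i+k}`. Multiply over `i ∈ I`. On the left,
`σ` is a cyclic permutation of `I` and `l_j² = 0`, so only two terms of the expansion survive and
the product is `(p^d + (-1)^|I|) L_I`. On the right, the product expands into `∑_f p^(w f) N_{J f}`
over the choices `f` of one point in each gap; different choices give different `J f`, the choice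
`J f = I` has weight `w = d - |I|`, and every other choice has smaller weight.
-/

section CommRing

variable {R : Type*} [CommRing R]

lemma Finset.sum_range_pow_mul_sub (c : R) (l : ℕ → R) (n : ℕ) :
    ∑ k ∈ range (n + 1), c ^ (n - k) * (c * l k - l (k + 1)) = c ^ (n + 1) * l 0 - l (n + 1) := by
  have hterm : ∀ k ∈ range (n + 1), c ^ (n - k) * (c * l k - l (k + 1)) =
      c ^ (n + 1 - k) * l k - c ^ (n + 1 - (k + 1)) * l (k + 1) := by
    intro k hk
    rw [mem_range] at hk
    rw [show n + 1 - k = n - k + 1 by omega, Nat.add_sub_add_right, pow_succ]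
    ring
  rw [sum_congr rfl hterm, sum_range_sub' (fun k => c ^ (n + 1 - k) * l k)]
  simp

/-- Since the only `σ`-stable subsets of `I` are `∅` and `I`, every term of the expanded product
other than the two extreme ones contains some `l (σ j)` twice. -/
lemma Finset.prod_mul_sub_eq_of_mul_self_eq_zero {ι : Type*} [DecidableEq ι] {I : Finset ι}
    (hI : I.Nonempty) {l : ι → R} (hl : ∀ i, l i * l i = 0) (a : ι → R) {σ : ι → ι}
    (hmaps : ∀ i ∈ I, σ i ∈ I) (hinj : Set.InjOn σ I)
    (hcyc : ∀ u ⊆ I, u.Nonempty → (∀ i ∈ u, σ i ∈ u) → u = I) :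
    ∏ i ∈ I, (a i * l i - l (σ i)) = (∏ i ∈ I, a i + (-1) ^ #I) * ∏ i ∈ I, l i := by
  have hexpand : ∏ i ∈ I, (a i * l i - l (σ i)) =
      ∑ t ∈ I.powerset, (∏ i ∈ t, a i * l i) * ∏ i ∈ I \ t, -l (σ i) := by
    rw [← prod_add]
    simp only [sub_eq_add_neg]
  have hmixed : ∀ t ∈ I.powerset, t ∉ ({∅, I} : Finset (Finset ι)) →
      (∏ i ∈ t, a i * l i) * ∏ i ∈ I \ t, -l (σ i) = 0 := by
    intro t ht hnot
    rw [mem_powerset] at ht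
    simp only [mem_insert, mem_singleton, not_or] at hnot
    obtain ⟨j, hj, hσj⟩ : ∃ j ∈ I \ t, σ j ∈ t := by
      by_contra! hclosed
      refine hnot.1 (eq_empty_of_forall_notMem fun i hi => ?_)
      have hcompl : I \ t = I := hcyc (I \ t) sdiff_subset
        (sdiff_nonempty.mpr fun h => hnot.2 (subset_antisymm ht h))
        fun i hi => mem_sdiff.mpr ⟨hmaps i (mem_sdiff.mp hi).1, hclosed i hi⟩
      exact (mem_sdiff.mp (hcompl.symm ▸ ht hi)).2 hi
    have hdvd : l (σ j) * l (σ j) ∣ (∏ i ∈ t, a i * l i) * ∏ i ∈ I \ t, -l (σ i) :=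
      mul_dvd_mul ((dvd_mul_left _ _).trans (dvd_prod_of_mem _ hσj))
        ((dvd_neg.mpr dvd_rfl).trans (dvd_prod_of_mem _ hj))
    rwa [hl, zero_dvd_iff] at hdvd
  have hpair : ({∅, I} : Finset (Finset ι)) ⊆ I.powerset := by
    simp [insert_subset_iff]
  have hperm : ∏ i ∈ I, l (σ i) = ∏ i ∈ I, l i :=
    prod_nbij σ hmaps hinj (surjOn_of_injOn_of_card_le σ hmaps hinj le_rfl) fun _ _ => rfl
  rw [hexpand, ← sum_subset hpair hmixed, sum_pair hI.ne_empty.symm]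
  simp only [prod_empty, sdiff_empty, sdiff_self, bot_eq_empty, prod_mul_distrib, prod_neg,
    card_empty, hperm]
  ring

end CommRing

namespace ZMod

variable {d : ℕ} {I : Finset (ZMod d)}

def shiftImage (f : I → ℕ) : Finset (ZMod d) := univ.image fun i : I => (i : ZMod d) + f i

lemma shiftImage_zero : shiftImage (0 : I → ℕ) = I := by
  simp [shiftImage, univ_eq_attach, attach_image_val]

variable [NeZero d]

lemma add_val_sub_sub_one_add_one (x y : ZMod d) : x + ((y - x - 1).val : ZMod d) + 1 = y := by
  rw [natCast_zmod_val]; ring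

lemma exists_add_add_one_mem (hI : I.Nonempty) (x : ZMod d) : ∃ t : ℕ, x + t + 1 ∈ I :=
  let ⟨y, hy⟩ := hI
  ⟨_, (add_val_sub_sub_one_add_one x y).symm ▸ hy⟩

/-- `x + gapLen hI x + 1` is the first element of `I` strictly after `x`. -/
def gapLen (hI : I.Nonempty) (x : ZMod d) : ℕ := Nat.find (exists_add_add_one_mem hI x)

lemma add_gapLen_add_one_mem (hI : I.Nonempty) (x : ZMod d) : x + gapLen hI x + 1 ∈ I :=
  Nat.find_spec (exists_add_add_one_mem hI x)

lemma add_add_one_notMem_of_lt_gapLen (hI : I.Nonempty) {x : ZMod d} {m : ℕ}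
    (hm : m < gapLen hI x) : x + m + 1 ∉ I :=
  Nat.find_min (exists_add_add_one_mem hI x) hm

lemma gapLen_lt (hI : I.Nonempty) (x : ZMod d) : gapLen hI x < d := by
  obtain ⟨y, hy⟩ := hI
  exact (Nat.find_le ((add_val_sub_sub_one_add_one x y).symm ▸ hy)).trans_lt (val_lt _)

lemma eq_and_eq_of_add_eq_add (hI : I.Nonempty) {i j : ZMod d} (hi : i ∈ I) (hj : j ∈ I)
    {k k' : ℕ} (hk : k ≤ gapLen hI i) (hk' : k' ≤ gapLen hI j) (h : i + k = j + k') :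
    i = j ∧ k = k' := by
  wlog hkk : k' ≤ k generalizing i j k k'
  · exact (this hj hi hk' hk h.symm (by omega)).imp Eq.symm Eq.symm
  obtain ⟨m, rfl⟩ := Nat.exists_eq_add_of_le hkk
  rcases m with _ | n
  · simpa using h
  · refine absurd ?_ (add_add_one_notMem_of_lt_gapLen hI (x := i) (m := n) (by omega))
    convert hj using 1
    push_cast at h ⊢
    linear_combination h

lemma exists_add_eq (hI : I.Nonempty) (x : ZMod d) :
    ∃ i ∈ I, ∃ k ≤ gapLen hI i, i + k = x := by
  have hex : ∃ s : ℕ, x - s ∈ I := let ⟨y, hy⟩ := hI; ⟨(x - y).val, by simpa using hy⟩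
  classical
  set s := Nat.find hex
  refine ⟨x - s, Nat.find_spec hex, s, ?_, by ring⟩
  by_contra! hlt
  refine Nat.find_min hex (m := s - (gapLen hI (x - s) + 1)) (by omega) ?_
  convert add_gapLen_add_one_mem hI (x - s) using 1
  rw [Nat.cast_sub (by omega)]
  push_cast
  ring

lemma sum_gapLen_add_one (hI : I.Nonempty) : ∑ i ∈ I, (gapLen hI i + 1) = d := by
  have hcard : #(I.sigma fun i => range (gapLen hI i + 1)) = #(univ : Finset (ZMod d)) := by
    refine card_bij (fun a _ => a.1 + a.2) (fun _ _ => mem_univ _) ?_ ?_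
    · rintro ⟨i, k⟩ hik ⟨j, k'⟩ hjk' h
      simp only [mem_sigma, mem_range] at hik hjk'
      obtain ⟨rfl, rfl⟩ := eq_and_eq_of_add_eq_add hI hik.1 hjk'.1
        (Nat.lt_succ_iff.mp hik.2) (Nat.lt_succ_iff.mp hjk'.2) h
      rfl
    · intro x _
      obtain ⟨i, hi, k, hk, rfl⟩ := exists_add_eq hI x
      exact ⟨⟨i, k⟩, by simp [hi]; omega, rfl⟩
  simpa [card_sigma] using hcard

def nextMem (hI : I.Nonempty) (i : ZMod d) : ZMod d := i + gapLen hI i + 1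

lemma nextMem_mem (hI : I.Nonempty) (i : ZMod d) : nextMem hI i ∈ I :=
  add_gapLen_add_one_mem hI i

lemma nextMem_injOn (hI : I.Nonempty) : Set.InjOn (nextMem hI) I := fun _ hi _ hj h =>
  (eq_and_eq_of_add_eq_add hI hi hj le_rfl le_rfl (add_right_cancel h)).1

lemma eq_of_forall_nextMem_mem (hI : I.Nonempty) {u : Finset (ZMod d)} (hu : u ⊆ I)
    (hne : u.Nonempty) (hnext : ∀ i ∈ u, nextMem hI i ∈ u) : u = I := by
  obtain ⟨i₀, hi₀⟩ := hne
  have hreach : ∀ n : ℕ, ∃ i ∈ u, ∃ k ≤ gapLen hI i, i + k = i₀ + n := by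
    intro n
    induction n with
    | zero => exact ⟨i₀, hi₀, 0, Nat.zero_le _, rfl⟩
    | succ n ih =>
      obtain ⟨i, hi, k, hk, hik⟩ := ih
      rcases hk.lt_or_eq with hlt | rfl
      · exact ⟨i, hi, k + 1, hlt, by push_cast; rw [← add_assoc, hik, add_assoc]⟩
      · exact ⟨nextMem hI i, hnext i hi, 0, Nat.zero_le _, by
          rw [nextMem, hik]; push_cast; ring⟩
  refine subset_antisymm hu fun j hj => ?_
  obtain ⟨i, hi, k, hk, hik⟩ := hreach (j - i₀).val
  rw [natCast_zmod_val, add_sub_cancel, ← add_zero j, ← Nat.cast_zero] at hik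
  rwa [(eq_and_eq_of_add_eq_add hI (hu hi) hj hk (Nat.zero_le _) hik).1] at hi

lemma sum_gapLen (hI : I.Nonempty) : ∑ i ∈ I, gapLen hI i = d - #I := by
  have h := sum_gapLen_add_one hI
  rw [sum_add_distrib, sum_const, smul_eq_mul, mul_one] at h
  omega

/-- The choices of one point `i + f i` in the gap that follows each `i ∈ I`. -/
def gapOffsets (hI : I.Nonempty) : Finset (I → ℕ) :=
  Fintype.piFinset fun i => range (gapLen hI i + 1)

def offsetWeight (hI : I.Nonempty) (f : I → ℕ) : ℕ := ∑ i : I, (gapLen hI i - f i)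

lemma le_gapLen_of_mem_gapOffsets {hI : I.Nonempty} {f : I → ℕ} (hf : f ∈ gapOffsets hI)
    (i : I) : f i ≤ gapLen hI i :=
  Nat.lt_succ_iff.mp (mem_range.mp (Fintype.mem_piFinset.mp hf i))

lemma injective_add_of_mem_gapOffsets {hI : I.Nonempty} {f : I → ℕ} (hf : f ∈ gapOffsets hI) :
    Function.Injective fun i : I => (i : ZMod d) + f i := fun i j h =>
  Subtype.ext (eq_and_eq_of_add_eq_add hI i.2 j.2 (le_gapLen_of_mem_gapOffsets hf i)
    (le_gapLen_of_mem_gapOffsets hf j) h).1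

lemma card_shiftImage {hI : I.Nonempty} {f : I → ℕ} (hf : f ∈ gapOffsets hI) :
    #(shiftImage f) = #I := by
  rw [shiftImage, card_image_of_injective _ (injective_add_of_mem_gapOffsets hf), card_univ,
    Fintype.card_coe]

lemma shiftImage_injOn (hI : I.Nonempty) :
    Set.InjOn shiftImage (gapOffsets hI : Set (I → ℕ)) := by
  intro f hf g hg h
  funext i
  have hi : (i : ZMod d) + f i ∈ shiftImage g := h ▸ mem_image_of_mem _ (mem_univ i)
  obtain ⟨j, -, hj⟩ := mem_image.mp hi
  obtain ⟨hji, hgf⟩ := eq_and_eq_of_add_eq_add hI j.2 i.2 (le_gapLen_of_mem_gapOffsets hg j)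
    (le_gapLen_of_mem_gapOffsets hf i) hj
  obtain rfl := Subtype.ext hji
  exact hgf.symm

lemma zero_mem_gapOffsets (hI : I.Nonempty) : 0 ∈ gapOffsets hI :=
  Fintype.mem_piFinset.mpr fun _ => mem_range.mpr (Nat.succ_pos _)

lemma offsetWeight_zero (hI : I.Nonempty) : offsetWeight hI 0 = d - #I := by
  simp only [offsetWeight, Pi.zero_apply, Nat.sub_zero]
  rw [sum_coe_sort I (gapLen hI), sum_gapLen]

lemma offsetWeight_lt (hI : I.Nonempty) {f : I → ℕ} (hf : f ∈ gapOffsets hI) (h0 : f ≠ 0) :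
    offsetWeight hI f < d - #I := by
  rw [← offsetWeight_zero hI]
  obtain ⟨i, hi⟩ := Function.ne_iff.mp h0
  refine sum_lt_sum (fun j _ => by simp) ⟨i, mem_univ i, ?_⟩
  have := le_gapLen_of_mem_gapOffsets hf i
  simp only [Pi.zero_apply] at hi ⊢
  omega

lemma filter_shiftImage_eq {hI : I.Nonempty} {f : I → ℕ} (hf : f ∈ gapOffsets hI) :
    {g ∈ gapOffsets hI | shiftImage g = shiftImage f} = {f} := by
  ext g
  simp only [mem_filter, mem_singleton]
  exact ⟨fun ⟨hg, h⟩ => shiftImage_injOn hI hg hf h, by rintro rfl; exact ⟨hf, rfl⟩⟩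

end ZMod

/-- The `ℚ`-action on the quotient is the quotient-module action, equal to `Algebra.smul_def`'s
only up to unfolding, so `rw [Algebra.smul_def]` does not fire on it. -/
lemma smul_eq_algebraMap_mul {d : ℕ} (q : ℚ) (x : ZipRing d) :
    q • x = algebraMap ℚ (ZipRing d) q * x :=
  Algebra.smul_def q x

lemma sum_range_pow_mul_Nelt {d : ℕ} (p : ℕ) (i : ZMod d) (n : ℕ) :
    ∑ k ∈ range (n + 1), (p : ZipRing d) ^ (n - k) * Nelt d p (i + k) =
      (p : ZipRing d) ^ (n + 1) * lcl d i - lcl d (i + n + 1) := by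
  have h := sum_range_pow_mul_sub (p : ZipRing d) (fun k => lcl d (i + k)) n
  push_cast at h
  simpa only [Nelt, add_zero, add_assoc] using h

section StrataCoefficients

open ZMod

variable {d : ℕ} [NeZero d] {I : Finset (ZMod d)}

lemma sum_gapOffsets_pow_mul_Nmon (p : ℕ) (hI : I.Nonempty) :
    ∑ f ∈ gapOffsets hI, (p : ZipRing d) ^ offsetWeight hI f * Nmon d p (shiftImage f) =
      ((p : ZipRing d) ^ d + (-1) ^ #I) * Lmon d I := by
  have hterm : ∀ f ∈ gapOffsets hI,
      (p : ZipRing d) ^ offsetWeight hI f * Nmon d p (shiftImage f) =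
        ∏ i : I, (p : ZipRing d) ^ (gapLen hI i - f i) * Nelt d p (i + f i) := by
    intro f hf
    rw [offsetWeight, ← prod_pow_eq_pow_sum, Nmon, shiftImage,
      prod_image fun i _ j _ h => injective_add_of_mem_gapOffsets hf h, prod_mul_distrib]
  calc _ = ∏ i : I, ∑ k ∈ range (gapLen hI i + 1),
          (p : ZipRing d) ^ (gapLen hI i - k) * Nelt d p (i + k) := by
        rw [sum_congr rfl hterm, prod_univ_sum]
        rfl
    _ = ∏ i : I, ((p : ZipRing d) ^ (gapLen hI i + 1) * lcl d i - lcl d (nextMem hI i)) :=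
        prod_congr rfl fun i _ => by rw [sum_range_pow_mul_Nelt, nextMem]
    _ = ∏ i ∈ I, ((p : ZipRing d) ^ (gapLen hI i + 1) * lcl d i - lcl d (nextMem hI i)) :=
        prod_coe_sort I fun i =>
          (p : ZipRing d) ^ (gapLen hI i + 1) * lcl d i - lcl d (nextMem hI i)
    _ = _ := by
        rw [prod_mul_sub_eq_of_mul_self_eq_zero hI (lcl_mul_self d) _
          (fun i _ => nextMem_mem hI i) (nextMem_injOn hI) (fun _ => eq_of_forall_nextMem_mem hI),
          prod_pow_eq_pow_sum, sum_gapLen_add_one, Lmon]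

/-- The coefficient of `N_J` in `(p^d + (-1)^|I|) L_I`. -/
def strataCoeff (p : ℕ) (hI : I.Nonempty) (J : Finset (ZMod d)) : ℕ :=
  ∑ f ∈ gapOffsets hI with shiftImage f = J, p ^ offsetWeight hI f

lemma sum_strataCoeff_mul_Nmon (p : ℕ) (hI : I.Nonempty) :
    ∑ J ∈ univ.powerset.filter (fun J => J.card = I.card),
        (strataCoeff p hI J : ZipRing d) * Nmon d p J =
      ((p : ZipRing d) ^ d + (-1) ^ #I) * Lmon d I := by
  rw [← sum_gapOffsets_pow_mul_Nmon, ← sum_fiberwise_of_maps_to (g := shiftImage)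
    (t := univ.powerset.filter fun J => J.card = I.card)
    fun f hf => mem_filter.mpr ⟨mem_powerset.mpr (subset_univ _), card_shiftImage hf⟩]
  refine sum_congr rfl fun J _ => ?_
  rw [strataCoeff, Nat.cast_sum, sum_mul]
  refine sum_congr rfl fun f hf => ?_
  rw [(mem_filter.mp hf).2]
  push_cast
  rfl

lemma strataCoeff_self (p : ℕ) (hI : I.Nonempty) : strataCoeff p hI I = p ^ (d - #I) := by
  have hfiber := filter_shiftImage_eq (zero_mem_gapOffsets hI)
  rw [shiftImage_zero] at hfiber
  rw [strataCoeff, hfiber, sum_singleton, offsetWeight_zero]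

lemma exists_strataCoeff_eq_pow (p : ℕ) (hI : I.Nonempty) {J : Finset (ZMod d)} (hJ : J ≠ I)
    (h : strataCoeff p hI J ≠ 0) : ∃ e < d - #I, strataCoeff p hI J = p ^ e := by
  obtain ⟨f, hfJ⟩ := nonempty_of_sum_ne_zero h
  obtain ⟨hf, rfl⟩ := mem_filter.mp hfJ
  refine ⟨offsetWeight hI f, offsetWeight_lt hI hf fun h0 => hJ (h0 ▸ shiftImage_zero), ?_⟩
  rw [strataCoeff, filter_shiftImage_eq hf, sum_singleton]

end StrataCoefficients

/-- Explicit form of the strata-effectivity of `L_I`: the coefficient of `N_I` is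
`p^(d−|I|)/(p^d+(−1)^|I|)` and every other nonzero coefficient is `p^e/(p^d+(−1)^|I|)`
with `0 ≤ e ≤ d−|I|−1`. -/
theorem stmt1 (d p : ℕ) [NeZero d] (hp : p.Prime) (I : Finset (ZMod d))
    (hI : I.Nonempty) :
    ∃ a : Finset (ZMod d) → ℚ,
      Lmon d I =
        (∑ J ∈ Finset.univ.powerset.filter (fun J => J.card = I.card),
          a J • Nmon d p J) ∧
      a I = (p : ℚ) ^ (d - I.card) / ((p : ℚ) ^ d + (-1) ^ I.card) ∧
      ∀ J : Finset (ZMod d), J.card = I.card → J ≠ I → a J ≠ 0 →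
        ∃ e : ℕ, (e : ℤ) ≤ (d : ℤ) - I.card - 1 ∧
          a J = (p : ℚ) ^ e / ((p : ℚ) ^ d + (-1) ^ I.card) := by
  set D : ℚ := (p : ℚ) ^ d + (-1) ^ I.card
  have hD : D ≠ 0 := by
    have : (1 : ℚ) < (p : ℚ) ^ d := one_lt_pow₀ (by exact_mod_cast hp.one_lt) (NeZero.ne d)
    rcases neg_one_pow_eq_or ℚ I.card with h | h <;> simp only [D, h] <;> linarith
  have hsum : ∑ J ∈ univ.powerset.filter (fun J => J.card = I.card),
      (strataCoeff p hI J : ℚ) • Nmon d p J = D • Lmon d I := by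
    simp only [smul_eq_algebraMap_mul, map_natCast, sum_strataCoeff_mul_Nmon, D, map_add,
      map_pow, map_neg, map_one]
  refine ⟨fun J => (strataCoeff p hI J : ℚ) / D, ?_, ?_, fun J _ hJ ha => ?_⟩
  · rw [← inv_smul_smul₀ hD (Lmon d I), ← hsum, smul_sum]
    simp only [smul_smul, inv_mul_eq_div]
  · simp [strataCoeff_self, D]
  · obtain ⟨e, he, hce⟩ := exists_strataCoeff_eq_pow p hI hJ fun h0 => ha (by simp [h0])
    have hcard : I.card ≤ d := by simpa using card_le_univ I
    exact ⟨e, by omega, by simp [hce, D]⟩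
end
end

section
/- (Explicit strata-expansion of Hodge–Chern monomials.) Let I, J ⊆ ℤ/d be nonempty proper subsets with |I| = |J|, and let a(I,J) denote the coefficient of N_J in the unique expansion L_I = Σ_{|J'| = |I|} a(I,J') · N_{J'} in R (unique because the family (N_{J'})_{|J'| = |I|} is linearly independent over ℚ). Let J^c = ⊔_t [a_t, b_t] be the decomposition of the complement J^c into maximal intervals. Then: (1) a(I,J) ≠ 0 if and only if the set [a_t, b_t + 1] \ I^c has exactly one element for every t; (2) if for every t one has [a_t, b_t + 1] \ I^c = {a_t + e_t} with integer 0 ≤ e_t ≤ b_t − a_t + 1, and e(I,J) := Σ_t e_t, then a(I,J) = p^{e(I,J)} / (p^d + (−1)^{|I|}). -/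
/-!
Multiplying the expansion of `L_I` by `P_{J^c}` isolates `a(I,J)`, and comparing coefficients of
the top monomial `L_{ℤ/d}` turns it into a count: `a(I,J) (p^d + (-1)^{|J|})` is the sum of
`p^{|T|}` over the sets `T ⊆ J^c` for which `I`, `T` and `(J^c \ T) + 1` partition `ℤ/d`.
Such a `T` is unique if it exists; it exists iff `I` meets each `[a_t, b_t + 1]` exactly once,
say at `a_t + e_t`, and it is then the union of the segments `[a_t, a_t + e_t)`.
-/

open MvPolynomial Finset

noncomputable section

/-- The interval `[a, a+k] = {a, a+1, …, a+k} ⊆ ℤ/d`. -/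
def intvl (d : ℕ) (a : ZMod d) (k : ℕ) : Finset (ZMod d) :=
  (Finset.range (k + 1)).image fun j : ℕ => a + (j : ZMod d)

variable {d : ℕ}

lemma natCast_inj_of_lt [NeZero d] {i j : ℕ} (hi : i < d) (hj : j < d)
    (h : (i : ZMod d) = j) : i = j := by
  simpa [ZMod.val_cast_of_lt hi, ZMod.val_cast_of_lt hj] using congrArg ZMod.val h

lemma eq_univ_of_forall_sub_one_mem [NeZero d] {S : Finset (ZMod d)} (hS : S.Nonempty)
    (h : ∀ x ∈ S, x - 1 ∈ S) : S = univ := by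
  obtain ⟨x, hx⟩ := hS
  have hsub : ∀ n : ℕ, x - n ∈ S := by
    intro n
    induction n with
    | zero => simpa using hx
    | succ n ih => simpa [sub_sub] using h _ ih
  refine eq_univ_of_forall fun y => ?_
  simpa using hsub (x - y).val

lemma mem_image_add_one {S : Finset (ZMod d)} {y : ZMod d} :
    y ∈ S.image (· + 1) ↔ y - 1 ∈ S :=
  ⟨fun h => by obtain ⟨x, hx, rfl⟩ := mem_image.mp h; simpa using hx,
    fun h => mem_image.mpr ⟨y - 1, h, sub_add_cancel y 1⟩⟩

lemma mem_intvl {a x : ZMod d} {k : ℕ} : x ∈ intvl d a k ↔ ∃ j ≤ k, a + j = x := by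
  simp [intvl]

/-- The condition for `L_I · ∏_{i ∈ T} l_i · ∏_{i ∈ K \ T} l_{i+1}` to be the top monomial
`L_{ℤ/d}`. -/
def IsExactCover (I K T : Finset (ZMod d)) : Prop :=
  ∀ y, (if y ∈ I then 1 else 0) + (if y ∈ T then 1 else 0) +
    (if y ∈ (K \ T).image (· + 1) then 1 else 0) = 1

instance [NeZero d] (I K : Finset (ZMod d)) : DecidablePred (IsExactCover I K) :=
  fun _ => inferInstanceAs (Decidable (∀ _, _))

lemma isExactCover_empty_univ_iff [NeZero d] {T : Finset (ZMod d)} :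
    IsExactCover ∅ univ T ↔ T = ∅ ∨ T = univ := by
  have hstep : IsExactCover ∅ univ T ↔ ∀ y, (y ∈ T ↔ y - 1 ∈ T) := by
    refine forall_congr' fun y => ?_
    by_cases hy : y ∈ T <;> by_cases hy' : y - 1 ∈ T <;>
      simp only [mem_image_add_one, hy, hy', notMem_empty, mem_sdiff, mem_univ] <;> norm_num
  rw [hstep]
  constructor
  · intro h
    rcases T.eq_empty_or_nonempty with hT | hT
    · exact Or.inl hT
    · exact Or.inr (eq_univ_of_forall_sub_one_mem hT fun x hx => (h x).1 hx)
  · rintro (rfl | rfl) y <;> simp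

/-- Where two exact covers differ, they differ one step to the left as well. -/
lemma IsExactCover.eq [NeZero d] {I K T T' : Finset (ZMod d)} (hI : I.Nonempty)
    (hT : IsExactCover I K T) (hT' : IsExactCover I K T') : T = T' := by
  have hleft : ∀ {T T'}, IsExactCover I K T → IsExactCover I K T' →
      ∀ x ∈ T \ T', x ∉ I ∧ x - 1 ∈ T \ T' := by
    intro T T' hT hT' x hx
    have h := hT x
    have h' := hT' x
    rw [mem_sdiff] at hx
    simp only [hx.1, hx.2, mem_image_add_one, mem_sdiff] at h h'
    split_ifs at h h' <;> simp_all
  by_contra hne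
  have hD : (symmDiff T T').Nonempty := by
    rwa [nonempty_iff_ne_empty, Ne, ← bot_eq_empty, symmDiff_eq_bot]
  have hDu := eq_univ_of_forall_sub_one_mem hD fun x hx => by
    rcases mem_symmDiff.mp hx with hx | hx
    · exact mem_symmDiff.mpr (Or.inl (mem_sdiff.mp (hleft hT hT' x (mem_sdiff.mpr hx)).2))
    · exact mem_symmDiff.mpr (Or.inr (mem_sdiff.mp (hleft hT' hT x (mem_sdiff.mpr hx)).2))
  obtain ⟨i, hi⟩ := hI
  have : i ∈ symmDiff T T' := hDu ▸ mem_univ i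
  rcases mem_symmDiff.mp this with hx | hx
  · exact (hleft hT hT' i (mem_sdiff.mpr hx)).1 hi
  · exact (hleft hT' hT i (mem_sdiff.mpr hx)).1 hi

section TopCoefficient

variable {σ R : Type*} [CommSemiring R]

def sqfreeExp (S : Finset σ) : σ →₀ ℕ := ∑ i ∈ S, Finsupp.single i 1

lemma sqfreeExp_apply [DecidableEq σ] (S : Finset σ) (y : σ) :
    sqfreeExp S y = if y ∈ S then 1 else 0 := by
  simp [sqfreeExp, Finsupp.finsetSum_apply, Finsupp.single_apply]

lemma prod_C_mul_X_eq_monomial [DecidableEq σ] (S : Finset σ) {f : σ → σ}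
    (hf : f.Injective) (c : σ → R) :
    ∏ i ∈ S, (C (c i) * X (f i) : MvPolynomial σ R) =
      monomial (sqfreeExp (S.image f)) (∏ i ∈ S, c i) := by
  rw [sqfreeExp, sum_image fun x _ y _ h => hf h, monomial_sum_prod]
  simp only [C_mul_X_eq_monomial]

lemma coeff_top_eq_zero_of_mem_sqIdeal [NeZero d] {f : MvPolynomial (ZMod d) ℚ}
    (hf : f ∈ sqIdeal d) : coeff (sqfreeExp univ) f = 0 := by
  rw [sqIdeal, Ideal.span, Submodule.mem_span_range_iff_exists_fun] at hf
  obtain ⟨c, rfl⟩ := hf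
  refine (coeff_sum _ _ _).trans (sum_eq_zero fun i _ => ?_)
  rw [smul_eq_mul, X_pow_eq_monomial, coeff_mul_monomial', if_neg]
  intro hle
  simpa [sqfreeExp_apply] using hle i

lemma sqfreeExp_add_eq_univ_iff [NeZero d] (I K T : Finset (ZMod d)) :
    sqfreeExp I + sqfreeExp T + sqfreeExp ((K \ T).image (· + 1)) = sqfreeExp univ ↔
      IsExactCover I K T := by
  simp only [Finsupp.ext_iff, Finsupp.add_apply, sqfreeExp_apply, mem_univ, ite_true]
  rfl

lemma coeff_top_prod_X_mul_prod [NeZero d] (A S : Finset (ZMod d)) (α β : ZMod d → ℚ) :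
    coeff (sqfreeExp univ)
        ((∏ i ∈ A, X i) * ∏ i ∈ S, (C (α i) * X i + C (β i) * X (i + 1))) =
      ∑ T ∈ S.powerset with IsExactCover A S T,
        (∏ i ∈ T, α i) * ∏ i ∈ S \ T, β i := by
  have hprod (T : Finset (ZMod d)) (c : ZMod d → ℚ) :
      ∏ i ∈ T, C (c i) * X i = monomial (sqfreeExp T) (∏ i ∈ T, c i) := by
    simpa using prod_C_mul_X_eq_monomial T Function.injective_id c
  have hA : (∏ i ∈ A, X i : MvPolynomial (ZMod d) ℚ) = monomial (sqfreeExp A) 1 := by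
    simpa using hprod A 1
  rw [prod_add, mul_sum, coeff_sum, sum_filter]
  refine sum_congr rfl fun T _ => ?_
  rw [hprod, prod_C_mul_X_eq_monomial (S \ T) (add_left_injective 1), hA, monomial_mul,
    monomial_mul, coeff_monomial, one_mul, ← add_assoc]
  exact if_congr (sqfreeExp_add_eq_univ_iff A S T) rfl rfl

end TopCoefficient

section ZipRing

variable {p : ℕ}

lemma lcl_sq (i : ZMod d) : lcl d i ^ 2 = 0 := by
  rw [lcl, ← map_pow, Ideal.Quotient.eq_zero_iff_mem]
  exact Ideal.subset_span ⟨i, rfl⟩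

lemma Nelt_mul_Pelt (i : ZMod d) : Nelt d p i * Pelt d p i = 0 := by
  rw [Nelt, Pelt]
  linear_combination (p : ZipRing d) ^ 2 * lcl_sq i - lcl_sq (i + 1)

lemma Nmon_mul_Pmon_eq_zero {J S : Finset (ZMod d)} (h : ¬Disjoint J S) :
    Nmon d p J * Pmon d p S = 0 := by
  obtain ⟨i, hiJ, hiS⟩ := not_disjoint_iff.mp h
  rw [Nmon, Pmon, ← mul_prod_erase _ _ hiJ, ← mul_prod_erase _ _ hiS]
  linear_combination ((∏ x ∈ J.erase i, Nelt d p x) * ∏ x ∈ S.erase i, Pelt d p x) *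
    Nelt_mul_Pelt (p := p) i

lemma Lmon_eq_mk (I : Finset (ZMod d)) :
    Lmon d I = Ideal.Quotient.mk (sqIdeal d) (∏ i ∈ I, X i) := by
  rw [Lmon, map_prod]
  rfl

lemma Pmon_eq_mk (S : Finset (ZMod d)) :
    Pmon d p S =
      Ideal.Quotient.mk (sqIdeal d) (∏ i ∈ S, (C (p : ℚ) * X i + C 1 * X (i + 1))) := by
  simp [Pmon, Pelt, lcl]

lemma Nmon_mul_Pmon_compl_eq_mk [NeZero d] (J : Finset (ZMod d)) :
    Nmon d p J * Pmon d p Jᶜ = Ideal.Quotient.mk (sqIdeal d)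
      (∏ i, (C (p : ℚ) * X i + C (if i ∈ J then -1 else 1) * X (i + 1))) := by
  rw [map_prod, ← prod_mul_prod_compl J, Nmon, Pmon]
  congr 1 <;> refine prod_congr rfl fun i hi => ?_
  · simp [hi, Nelt, sub_eq_add_neg, lcl]
  · simp [mem_compl.mp hi, Pelt, lcl]

lemma smul_mk_eq_mk_C_mul (q : ℚ) (f : MvPolynomial (ZMod d) ℚ) :
    q • Ideal.Quotient.mk (sqIdeal d) f = Ideal.Quotient.mk (sqIdeal d) (C q * f) := by
  rw [← smul_eq_C_mul]
  rfl

lemma coeff_top_eq_of_mk_eq [NeZero d] {f g : MvPolynomial (ZMod d) ℚ}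
    (h : Ideal.Quotient.mk (sqIdeal d) f = Ideal.Quotient.mk (sqIdeal d) g) :
    coeff (sqfreeExp univ) f = coeff (sqfreeExp univ) g := by
  rw [← sub_eq_zero, ← coeff_sub]
  exact coeff_top_eq_zero_of_mem_sqIdeal (Ideal.Quotient.eq.mp h)

lemma coeff_top_prod_univ [NeZero d] (c : ℚ) (β : ZMod d → ℚ) :
    coeff (sqfreeExp univ) (∏ i : ZMod d, (C c * X i + C (β i) * X (i + 1))) =
      c ^ d + ∏ i, β i := by
  have h := coeff_top_prod_X_mul_prod ∅ univ (fun _ => c) β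
  have hcovers :
      {T ∈ (univ : Finset (ZMod d)).powerset | IsExactCover ∅ univ T} = {∅, univ} := by
    ext T
    simp [isExactCover_empty_univ_iff]
  rw [prod_empty, one_mul, hcovers, sum_pair univ_nonempty.ne_empty.symm] at h
  simpa [add_comm] using h

/-- As `N_i P_i = 0`, multiplying by `P_{J^c}` kills every `N_{J'}` with `J' ≠ J`. -/
lemma mul_denom_eq_sum_exactCover [NeZero d] {I J : Finset (ZMod d)} (hcard : I.card = J.card)
    {a : Finset (ZMod d) → ℚ}
    (ha : Lmon d I =
      ∑ J' ∈ univ.powerset.filter (fun J' => J'.card = I.card), a J' • Nmon d p J') :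
    a J * ((p : ℚ) ^ d + (-1) ^ J.card) =
      ∑ T ∈ Jᶜ.powerset with IsExactCover I Jᶜ T, (p : ℚ) ^ T.card := by
  have hkey : Lmon d I * Pmon d p Jᶜ = a J • (Nmon d p J * Pmon d p Jᶜ) := by
    rw [ha, sum_mul, sum_eq_single_of_mem J (by simp [hcard]), smul_mul_assoc]
    intro J' hJ' hne
    have hsub : ¬J' ⊆ J := fun h => hne (eq_of_subset_of_card_le h (by simp_all))
    rw [smul_mul_assoc, Nmon_mul_Pmon_eq_zero (by rwa [disjoint_compl_right_iff]),
      smul_zero]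
  rw [Nmon_mul_Pmon_compl_eq_mk, Lmon_eq_mk, Pmon_eq_mk, ← map_mul, smul_mk_eq_mk_C_mul] at hkey
  have := coeff_top_eq_of_mk_eq hkey
  rw [coeff_top_prod_X_mul_prod, coeff_C_mul,
    coeff_top_prod_univ, prod_ite_mem, univ_inter, prod_const] at this
  simpa using this.symm

end ZipRing

section IntervalDecomposition

variable {ι : Type*} [Fintype ι]

structure IsMaxIntervalDecomp (K : Finset (ZMod d)) (st : ι → ZMod d) (len : ι → ℕ) :
    Prop where
  disjoint : ∀ s t, s ≠ t → Disjoint (intvl d (st s) (len s)) (intvl d (st t) (len t))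
  cover : K = univ.biUnion fun t => intvl d (st t) (len t)
  sub_one_notMem : ∀ t, st t - 1 ∉ K
  add_len_add_one_notMem : ∀ t, st t + (len t : ZMod d) + 1 ∉ K

lemma image_range_subset_intvl {a : ZMod d} {e k : ℕ} (h : e ≤ k + 1) :
    (range e).image (fun j : ℕ => a + (j : ZMod d)) ⊆ intvl d a k :=
  image_subset_image (range_subset_range.mpr h)

def initialSegments (st : ι → ZMod d) (e : ι → ℕ) : Finset (ZMod d) :=
  univ.biUnion fun t => (range (e t)).image fun j : ℕ => st t + j

namespace IsMaxIntervalDecomp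

variable {K I T : Finset (ZMod d)} {st : ι → ZMod d} {len : ι → ℕ}

lemma intvl_subset (hK : IsMaxIntervalDecomp K st len) (t : ι) : intvl d (st t) (len t) ⊆ K :=
  hK.cover ▸ subset_biUnion_of_mem (fun t => intvl d (st t) (len t)) (mem_univ t)

lemma exists_of_mem (hK : IsMaxIntervalDecomp K st len) {x : ZMod d} (hx : x ∈ K) :
    ∃ t, ∃ j ≤ len t, st t + j = x := by
  rw [hK.cover, mem_biUnion] at hx
  obtain ⟨t, -, ht⟩ := hx
  exact ⟨t, mem_intvl.mp ht⟩

lemma len_add_two_le [NeZero d] (hK : IsMaxIntervalDecomp K st len) (hKu : K ≠ univ) (t : ι) :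
    len t + 2 ≤ d := by
  by_contra! hlt
  refine hKu (eq_univ_of_forall fun x => hK.intvl_subset t (mem_intvl.mpr ?_))
  exact ⟨(x - st t).val, by have := (x - st t).val_lt; omega, by simp⟩

lemma natCast_eq_iff_of_le [NeZero d] (hK : IsMaxIntervalDecomp K st len) (hKu : K ≠ univ)
    {t : ι} {i j : ℕ} (hi : i ≤ len t + 1) (hj : j ≤ len t + 1) :
    st t + i = st t + j ↔ i = j := by
  have := hK.len_add_two_le hKu t
  exact ⟨fun h => natCast_inj_of_lt (by omega) (by omega) (add_left_cancel h),
    by rintro rfl; rfl⟩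

lemma add_natCast_notMem (hK : IsMaxIntervalDecomp K st len) (hT : T ⊆ K) (t : ι) :
    st t + ((len t + 1 : ℕ) : ZMod d) ∉ T := fun h =>
  hK.add_len_add_one_notMem t (by simpa [add_assoc] using hT h)

lemma add_natCast_mem_shift_iff (hK : IsMaxIntervalDecomp K st len) {t : ι}
    {j : ℕ} (hj : j ≤ len t + 1) :
    st t + j ∈ (K \ T).image (· + 1) ↔ 0 < j ∧ st t + ((j - 1 : ℕ) : ZMod d) ∉ T := by
  rw [mem_image_add_one, mem_sdiff]
  cases j with
  | zero => simp [hK.sub_one_notMem t]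
  | succ k =>
    have hk : st t + k ∈ K := hK.intvl_subset t (mem_intvl.mpr ⟨k, by omega, rfl⟩)
    rw [Nat.cast_succ, ← add_assoc, add_sub_cancel_right]
    simp [hk]

lemma injOn_add_natCast [NeZero d] (hK : IsMaxIntervalDecomp K st len) (hKu : K ≠ univ)
    (t : ι) : Set.InjOn (fun j : ℕ => st t + j) (range (len t + 2)) := fun _ hi _ hj h =>
  (hK.natCast_eq_iff_of_le hKu (Nat.lt_succ_iff.mp (mem_range.mp hi))
    (Nat.lt_succ_iff.mp (mem_range.mp hj))).mp h

/-- Summing the exact-cover equation over `[st t, st t + len t + 1]`, the contributions of `T` and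
of `(K \ T) + 1` add up to `len t + 1`, leaving exactly one point of `I`. -/
lemma card_sdiff_compl_eq_one [NeZero d] (hK : IsMaxIntervalDecomp K st len) (hKu : K ≠ univ)
    (hT : T ⊆ K) (hcov : IsExactCover I K T) (t : ι) :
    (intvl d (st t) (len t + 1) \ Iᶜ).card = 1 := by
  set m := len t
  set f : ℕ → ZMod d := fun j => st t + j
  set τ : ℕ → ℕ := fun j => if f j ∈ T then 1 else 0
  set γ : ℕ → ℕ := fun j => if f j ∈ (K \ T).image (· + 1) then 1 else 0
  have hτ : τ (m + 1) = 0 := if_neg (hK.add_natCast_notMem hT t)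
  have hγ : γ 0 = 0 :=
    if_neg fun h => lt_irrefl 0 (hK.add_natCast_mem_shift_iff (Nat.zero_le _) |>.mp h).1
  have hτγ : ∀ j ∈ range (m + 1), τ j + γ (j + 1) = 1 := by
    intro j hj
    have hj : j + 1 ≤ m + 1 := by have := mem_range.mp hj; omega
    simp only [τ, γ, f, hK.add_natCast_mem_shift_iff hj]
    split_ifs <;> simp_all
  have hsum := sum_congr rfl fun j (_ : j ∈ range (m + 2)) => hcov (f j)
  rw [sum_add_distrib, sum_add_distrib, sum_range_succ τ, sum_range_succ' γ, hτ, hγ,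
    add_zero, add_zero, add_assoc, ← sum_add_distrib, sum_congr rfl hτγ] at hsum
  simp only [sum_const, card_range, smul_eq_mul, mul_one] at hsum
  rw [sdiff_compl, inf_eq_inter, intvl, ← filter_mem_eq_inter, card_filter,
    sum_image (hK.injOn_add_natCast hKu t)]
  change (∑ j ∈ range (m + 2), if f j ∈ I then 1 else 0) = 1
  omega

variable {e : ι → ℕ}

lemma initialSegments_subset (hK : IsMaxIntervalDecomp K st len) (he : ∀ t, e t ≤ len t + 1) :
    initialSegments st e ⊆ K :=
  biUnion_subset.mpr fun t _ => (image_range_subset_intvl (he t)).trans (hK.intvl_subset t)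

lemma add_natCast_mem_initialSegments_iff [NeZero d] (hK : IsMaxIntervalDecomp K st len)
    (hKu : K ≠ univ) (he : ∀ t, e t ≤ len t + 1) {t : ι} {j : ℕ} (hj : j ≤ len t + 1) :
    st t + j ∈ initialSegments st e ↔ j < e t := by
  refine ⟨fun h => ?_, fun h =>
    mem_biUnion.mpr ⟨t, mem_univ t, mem_image_of_mem _ (mem_range.mpr h)⟩⟩
  obtain ⟨s, -, hs⟩ := mem_biUnion.mp h
  obtain ⟨i, hi, hsi⟩ := mem_image.mp hs
  have hi := mem_range.mp hi
  have hjt : j ≤ len t := by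
    by_contra hjt
    obtain rfl : j = len t + 1 := by omega
    exact hK.add_natCast_notMem (hK.initialSegments_subset he) t h
  obtain rfl : s = t := by
    by_contra hne
    refine disjoint_left.mp (hK.disjoint s t hne) ?_ (mem_intvl.mpr ⟨j, hjt, rfl⟩)
    exact mem_intvl.mpr ⟨i, by have := he s; omega, hsi⟩
  rw [hK.natCast_eq_iff_of_le hKu (by have := he s; omega) hj] at hsi
  omega

lemma card_initialSegments [NeZero d] (hK : IsMaxIntervalDecomp K st len) (hKu : K ≠ univ)
    (he : ∀ t, e t ≤ len t + 1) : (initialSegments st e).card = ∑ t, e t := by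
  rw [initialSegments, card_biUnion fun s _ t _ hst =>
    (hK.disjoint s t hst).mono (image_range_subset_intvl (he s)) (image_range_subset_intvl (he t))]
  refine sum_congr rfl fun t _ => ?_
  rw [card_image_of_injOn ((hK.injOn_add_natCast hKu t).mono ?_), card_range]
  exact coe_subset.mpr (range_subset_range.mpr (by have := he t; omega))

/-- Each point of `ℤ/d` is covered at most once by `I`, the initial segments and their shifted
complement, and the total count is `|I| + |K| = d`; hence each point is covered exactly once. -/
lemma isExactCover_initialSegments [NeZero d] (hK : IsMaxIntervalDecomp K st len)
    (hKu : K ≠ univ) (he : ∀ t, e t ≤ len t + 1)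
    (hsing : ∀ t, intvl d (st t) (len t + 1) \ Iᶜ = {st t + (e t : ZMod d)})
    (hcard : I.card + K.card = d) :
    IsExactCover I K (initialSegments st e) := by
  set T := initialSegments st e
  have hTK : T ⊆ K := hK.initialSegments_subset he
  set h : ZMod d → ℕ := fun y => (if y ∈ I then 1 else 0) + (if y ∈ T then 1 else 0) +
    (if y ∈ (K \ T).image (· + 1) then 1 else 0)
  have hle : ∀ y ∈ univ, h y ≤ 1 := by
    intro y _
    by_cases hy : ∃ t, ∃ j ≤ len t + 1, st t + j = y
    · obtain ⟨t, j, hj, rfl⟩ := hy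
      have hI : st t + j ∈ I ↔ j = e t :=
        calc st t + j ∈ I ↔ st t + j ∈ intvl d (st t) (len t + 1) \ Iᶜ := by
              simp [mem_intvl.mpr ⟨j, hj, rfl⟩]
          _ ↔ st t + j = st t + e t := by rw [hsing t, mem_singleton]
          _ ↔ j = e t := hK.natCast_eq_iff_of_le hKu hj (he t)
      simp only [h, T, hI, hK.add_natCast_mem_shift_iff hj,
        hK.add_natCast_mem_initialSegments_iff hKu he hj,
        hK.add_natCast_mem_initialSegments_iff hKu he (by omega : j - 1 ≤ len t + 1)]
      split_ifs <;> omega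
    · push Not at hy
      have hyK : y ∉ K := fun hyK => by
        obtain ⟨t, j, hj, rfl⟩ := hK.exists_of_mem hyK
        exact hy t j (by omega) rfl
      have hyC : y ∉ (K \ T).image (· + 1) := fun hyC => by
        obtain ⟨t, j, hj, hj'⟩ := hK.exists_of_mem (mem_sdiff.mp (mem_image_add_one.mp hyC)).1
        exact hy t (j + 1) (by omega) (by rw [Nat.cast_succ, ← add_assoc, hj', sub_add_cancel])
      have hyT : y ∉ T := fun hyT => hyK (hTK hyT)
      simp only [h, hyC, hyT, if_false, add_zero]
      split_ifs <;> omega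
  have hsum : ∑ y, h y = ∑ _y : ZMod d, 1 := by
    have hC := card_image_of_injective (K \ T) (add_left_injective (1 : ZMod d))
    have hKT := card_sdiff_add_card_eq_card hTK
    simp only [h, sum_add_distrib, sum_boole, filter_mem_eq_inter, univ_inter, Nat.cast_id,
      sum_const, card_univ, ZMod.card, smul_eq_mul, mul_one]
    omega
  exact fun y => (sum_eq_sum_iff_of_le hle).mp hsum y (mem_univ y)

end IsMaxIntervalDecomp

end IntervalDecomposition

lemma natCast_pow_add_neg_one_pow_ne_zero {p d : ℕ} (hp : 1 < p) (hd : d ≠ 0) (n : ℕ) :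
    (p : ℚ) ^ d + (-1) ^ n ≠ 0 := by
  have hpd : (p : ℚ) ≤ (p : ℚ) ^ d := le_self_pow₀ (by exact_mod_cast hp.le) hd
  have hp2 : (2 : ℚ) ≤ p := by exact_mod_cast hp
  rcases neg_one_pow_eq_or ℚ n with h | h <;> rw [h] <;> linarith

theorem stmt7_general (d p : ℕ) [NeZero d] (hp : p.Prime)
    (I J : Finset (ZMod d))
    (hIne : I.Nonempty)
    (hJne : J.Nonempty)
    (hcard : I.card = J.card)
    {ι : Type} [Fintype ι]
    (st : ι → ZMod d) (len : ι → ℕ)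
    (hdisj : ∀ s t : ι, s ≠ t →
      Disjoint (intvl d (st s) (len s)) (intvl d (st t) (len t)))
    (hcover : Jᶜ = Finset.univ.biUnion fun t => intvl d (st t) (len t))
    (hmaxl : ∀ t : ι, st t - 1 ∉ (Jᶜ : Finset (ZMod d)))
    (hmaxr : ∀ t : ι, st t + (len t : ZMod d) + 1 ∉ (Jᶜ : Finset (ZMod d)))
    (a : Finset (ZMod d) → ℚ)
    (ha : Lmon d I =
      ∑ J' ∈ Finset.univ.powerset.filter (fun J' => J'.card = I.card),
        a J' • Nmon d p J') :
    (a J ≠ 0 ↔ ∀ t : ι, ((intvl d (st t) (len t + 1)) \ Iᶜ).card = 1) ∧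
    (∀ e : ι → ℕ, (∀ t, e t ≤ len t + 1) →
      (∀ t : ι, (intvl d (st t) (len t + 1)) \ Iᶜ = {st t + (e t : ZMod d)}) →
      a J = (p : ℚ) ^ (∑ t : ι, e t) / ((p : ℚ) ^ d + (-1) ^ I.card)) := by
  have hK : IsMaxIntervalDecomp Jᶜ st len := ⟨hdisj, hcover, hmaxl, hmaxr⟩
  have hKu : Jᶜ ≠ univ := by simpa [compl_eq_univ_iff] using hJne.ne_empty
  have hD := natCast_pow_add_neg_one_pow_ne_zero hp.one_lt (NeZero.ne d) I.card
  have hformula := mul_denom_eq_sum_exactCover hcard ha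
  rw [← hcard] at hformula
  have hvalue : ∀ e : ι → ℕ, (∀ t, e t ≤ len t + 1) →
      (∀ t : ι, (intvl d (st t) (len t + 1)) \ Iᶜ = {st t + (e t : ZMod d)}) →
      a J = (p : ℚ) ^ (∑ t : ι, e t) / ((p : ℚ) ^ d + (-1) ^ I.card) := by
    intro e he hsing
    have hcov := hK.isExactCover_initialSegments hKu he hsing
      (by rw [hcard, card_add_card_compl, ZMod.card])
    have hcovers : {T ∈ Jᶜ.powerset | IsExactCover I Jᶜ T} = {initialSegments st e} :=
      eq_singleton_iff_unique_mem.mpr ⟨mem_filter.mpr ⟨mem_powerset.mpr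
        (hK.initialSegments_subset he), hcov⟩, fun T hT => (mem_filter.mp hT).2.eq hIne hcov⟩
    rw [hcovers, sum_singleton, hK.card_initialSegments hKu he] at hformula
    rw [eq_div_iff hD, hformula]
  refine ⟨⟨fun h t => ?_, fun h => ?_⟩, hvalue⟩
  · obtain ⟨T, hT, -⟩ := exists_ne_zero_of_sum_ne_zero (hformula ▸ mul_ne_zero h hD)
    exact hK.card_sdiff_compl_eq_one hKu (mem_powerset.mp (mem_filter.mp hT).1)
      (mem_filter.mp hT).2 t
  · choose x hx using fun t => card_eq_one.mp (h t)
    choose e he hxe using fun t =>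
      mem_intvl.mp (mem_sdiff.mp ((hx t).symm ▸ mem_singleton_self (x t))).1
    rw [hvalue e he fun t => by rw [hx t, hxe t]]
    exact div_ne_zero (pow_ne_zero _ (by exact_mod_cast hp.ne_zero)) hD

/-- Explicit strata-expansion of the Hodge–Chern monomials: formula for the coefficient
`a(I,J)` of `N_J` in `L_I = Σ_{|J'|=|I|} a(I,J') N_{J'}`, in terms of the decomposition of
the complement `J^c` into maximal intervals `[st t, st t + len t]`. -/
theorem stmt7 (d p : ℕ) [NeZero d] (hp : p.Prime)
    (I J : Finset (ZMod d))
    (hIne : I.Nonempty) (hIprop : I ≠ Finset.univ)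
    (hJne : J.Nonempty) (hJprop : J ≠ Finset.univ)
    (hcard : I.card = J.card)
    {ι : Type} [Fintype ι] [DecidableEq ι]
    (st : ι → ZMod d) (len : ι → ℕ)
    (hdisj : ∀ s t : ι, s ≠ t →
      Disjoint (intvl d (st s) (len s)) (intvl d (st t) (len t)))
    (hcover : Jᶜ = Finset.univ.biUnion fun t => intvl d (st t) (len t))
    (hmaxl : ∀ t : ι, st t - 1 ∉ (Jᶜ : Finset (ZMod d)))
    (hmaxr : ∀ t : ι, st t + (len t : ZMod d) + 1 ∉ (Jᶜ : Finset (ZMod d)))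
    (a : Finset (ZMod d) → ℚ)
    (ha : Lmon d I =
      ∑ J' ∈ Finset.univ.powerset.filter (fun J' => J'.card = I.card),
        a J' • Nmon d p J') :
    (a J ≠ 0 ↔ ∀ t : ι, ((intvl d (st t) (len t + 1)) \ Iᶜ).card = 1) ∧
    (∀ e : ι → ℕ, (∀ t, e t ≤ len t + 1) →
      (∀ t : ι, (intvl d (st t) (len t + 1)) \ Iᶜ = {st t + (e t : ZMod d)}) →
      a J = (p : ℚ) ^ (∑ t : ι, e t) / ((p : ℚ) ^ d + (-1) ^ I.card)) :=
  stmt7_general d p hp I J hIne hJne hcard st len hdisj hcover hmaxl hmaxr a ha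
end
end
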